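/- Suppose Ω is partitioned into pairwise disjoint sets P_L (known positives), N_L (known negatives) and U (unlabeled instances) with P_L ∪ N_L ∪ U = Ω. Let P_U ⊆ U be nonempty (the latent positives) with P_L ∪ P_U ≠ Ω, and let r ∈ {1, …, |Ω|}. If P*_U ⊆ U is a set of surrogate positives satisfying |P*_U| = |P_U| and TPR(P*_U, r) ≥ TPR(P_U, r), then TPR(P_L ∪ P*_U, r) ≥ TPR(P_L ∪ P_U, r) and FPR(P_L ∪ P*_U, r) ≤ FPR(P_L ∪ P_U, r). -/

import Mathlib

open Finset

variable {α : Type*} [Fintype α] [DecidableEq α]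

/-- `top S r`: the elements of `S` ranked in the top `r` positions.
Ranks are 1-based: the rank of `x` is `(rk x : ℕ) + 1`, so `rank x ≤ r ↔ (rk x : ℕ) < r`. -/
def topSet (rk : α ≃ Fin (Fintype.card α)) (S : Finset α) (r : ℕ) : Finset α :=
  S.filter fun x => ((rk x : Fin (Fintype.card α)) : ℕ) < r

/-- True positive rate of the positive set `S` at cutoff rank `r`. -/
noncomputable def TPR (rk : α ≃ Fin (Fintype.card α)) (S : Finset α) (r : ℕ) : ℝ :=
  (topSet rk S r).card / S.card

/-- False positive rate of the positive set `S` at cutoff rank `r`: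
the TPR of the complement `Ω \ S`. -/
noncomputable def FPR (rk : α ≃ Fin (Fintype.card α)) (S : Finset α) (r : ℕ) : ℝ :=
  TPR rk Sᶜ r

/-
For sets of equal size, TPR compares exactly as the number of top-ranked elements does. Adding
the labelled positives `PL`, disjoint from `U`, to `PU` or to `Pstar` adds the same amount to the
size and to that count, so the comparison passes to the unions. Their complements again have equal
size, and the top-ranked counts of a set and of its complement add up to that of `Ω`, so the
comparison reverses for FPR.
-/

section Ranking

variable (rk : α ≃ Fin (Fintype.card α)) (r : ℕ)

lemma card_topSet_union_of_disjoint {S T : Finset α} (h : Disjoint S T) :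
    #(topSet rk (S ∪ T) r) = #(topSet rk S r) + #(topSet rk T r) := by
  rw [topSet, filter_union, card_union_of_disjoint (disjoint_filter_filter h)]
  rfl

lemma card_topSet_add_card_topSet_compl (S : Finset α) :
    #(topSet rk S r) + #(topSet rk Sᶜ r) = #(topSet rk univ r) := by
  rw [← card_topSet_union_of_disjoint rk r disjoint_compl_right, union_compl]

omit [DecidableEq α] in
lemma card_topSet_le_of_TPR_le {S T : Finset α} (hcard : #S = #T)
    (hTPR : TPR rk S r ≤ TPR rk T r) : #(topSet rk S r) ≤ #(topSet rk T r) := by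
  rcases S.eq_empty_or_nonempty with rfl | hS
  · simp [topSet]
  have hpos : (0 : ℝ) < #S := by exact_mod_cast hS.card_pos
  unfold TPR at hTPR
  rw [← hcard] at hTPR
  exact_mod_cast (div_le_div_iff_of_pos_right hpos).mp hTPR

omit [DecidableEq α] in
lemma TPR_le_TPR_of_card_topSet_le {S T : Finset α} (hcard : #S = #T)
    (htop : #(topSet rk S r) ≤ #(topSet rk T r)) : TPR rk S r ≤ TPR rk T r := by
  unfold TPR
  rw [hcard]
  gcongr

lemma FPR_le_FPR_of_card_topSet_le {S T : Finset α} (hcard : #S = #T)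
    (htop : #(topSet rk S r) ≤ #(topSet rk T r)) : FPR rk T r ≤ FPR rk S r := by
  have hcompl : #Tᶜ = #Sᶜ := by rw [card_compl, card_compl, hcard]
  apply TPR_le_TPR_of_card_topSet_le rk r hcompl
  have hS := card_topSet_add_card_topSet_compl rk r S
  have hT := card_topSet_add_card_topSet_compl rk r T
  omega

end Ranking

theorem stmt_5_general (rk : α ≃ Fin (Fintype.card α)) (PL U : Finset α)
    (hPU : Disjoint PL U)
    (PU : Finset α) (hPUsub : PU ⊆ U)
    (r : ℕ)
    (Pstar : Finset α) (hstarsub : Pstar ⊆ U) (hstarcard : Pstar.card = PU.card)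
    (hstarTPR : TPR rk Pstar r ≥ TPR rk PU r) :
    TPR rk (PL ∪ Pstar) r ≥ TPR rk (PL ∪ PU) r ∧
      FPR rk (PL ∪ Pstar) r ≤ FPR rk (PL ∪ PU) r := by
  have hPLPU : Disjoint PL PU := hPU.mono_right hPUsub
  have hPLPstar : Disjoint PL Pstar := hPU.mono_right hstarsub
  have hcard : #(PL ∪ PU) = #(PL ∪ Pstar) := by
    rw [card_union_of_disjoint hPLPU, card_union_of_disjoint hPLPstar, hstarcard]
  have htop : #(topSet rk (PL ∪ PU) r) ≤ #(topSet rk (PL ∪ Pstar) r) := by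
    rw [card_topSet_union_of_disjoint rk r hPLPU, card_topSet_union_of_disjoint rk r hPLPstar]
    exact Nat.add_le_add_left (card_topSet_le_of_TPR_le rk r hstarcard.symm hstarTPR) _
  exact ⟨TPR_le_TPR_of_card_topSet_le rk r hcard htop,
    FPR_le_FPR_of_card_topSet_le rk r hcard htop⟩

theorem stmt_5 (rk : α ≃ Fin (Fintype.card α)) (PL NL U : Finset α)
    (hPN : Disjoint PL NL) (hPU : Disjoint PL U) (hNU : Disjoint NL U)
    (hcover : PL ∪ NL ∪ U = Finset.univ)
    (PU : Finset α) (hPUsub : PU ⊆ U) (hPUne : PU.Nonempty)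
    (hproper : PL ∪ PU ≠ Finset.univ)
    (r : ℕ) (hr1 : 1 ≤ r) (hr2 : r ≤ Fintype.card α)
    (Pstar : Finset α) (hstarsub : Pstar ⊆ U) (hstarcard : Pstar.card = PU.card)
    (hstarTPR : TPR rk Pstar r ≥ TPR rk PU r) :
    TPR rk (PL ∪ Pstar) r ≥ TPR rk (PL ∪ PU) r ∧
      FPR rk (PL ∪ Pstar) r ≤ FPR rk (PL ∪ PU) r :=
  stmt_5_general rk PL U hPU PU hPUsub r Pstar hstarsub hstarcard hstarTPR
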